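/- arXiv:2310.07484 — 2 statements merged into one kernel-verified Lean document; each statement's English description precedes it below -/
import Mathlib

section
/- Let {N_{β0β1}} be a POVM on ℂ² and set B0 = N_{00}+N_{01}−N_{10}−N_{11}, B1 = N_{00}−N_{01}+N_{10}−N_{11}. Then for every θ− ∈ (0, π/2): (1/2)[Tr(Z·B0) + Tr(Z·B1) − sin(θ−)·Tr(X·B0) + sin(θ−)·Tr(X·B1) + cos(θ−)·Tr(B0 + B1)] ≤ 2. -/
open Matrix ComplexOrder

/-! With `c = cos θ`, `s = sin θ`, the objective is `2 ∑ᵢⱼ tr(Wᵢⱼ Nᵢⱼ)` where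
`W₀₀ = -W₁₁ = cI + Z` and `W₁₀ = -W₀₁ = sX`. The matrix `Y = diag(1 + c, 1 - c)` dominates all four
`Wᵢⱼ` (each `Y - Wᵢⱼ` is a real symmetric matrix with nonnegative diagonal and determinant, using
`s² + c² = 1`), so `∑ tr(Wᵢⱼ Nᵢⱼ) ≤ ∑ tr(Y Nᵢⱼ) = tr Y = 2` because the `Nᵢⱼ` are positive and sum
to the identity. -/

namespace Matrix

variable {n 𝕜 : Type*} [Fintype n] [RCLike 𝕜]

open MatrixOrder in
theorem PosSemidef.trace_mul_nonneg {A B : Matrix n n 𝕜} (hA : A.PosSemidef)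
    (hB : B.PosSemidef) : 0 ≤ (A * B).trace := by
  classical
  obtain ⟨C, rfl⟩ := CStarAlgebra.nonneg_iff_eq_star_mul_self.mp hA.nonneg
  rw [mul_assoc, trace_mul_comm]
  exact (hB.mul_mul_conjTranspose_same C).trace_nonneg

theorem sum_trace_mul_le_trace [DecidableEq n] {ι : Type*} [Fintype ι] {N : ι → Matrix n n 𝕜}
    (hN : ∀ i, (N i).PosSemidef) (hsum : ∑ i, N i = 1) {W : ι → Matrix n n 𝕜}
    {Y : Matrix n n 𝕜} (hY : ∀ i, (Y - W i).PosSemidef) :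
    ∑ i, (W i * N i).trace ≤ Y.trace := by
  have hgap : 0 ≤ ∑ i, ((Y - W i) * N i).trace :=
    Finset.sum_nonneg fun i _ => (hY i).trace_mul_nonneg (hN i)
  calc ∑ i, (W i * N i).trace
      ≤ ∑ i, (W i * N i).trace + ∑ i, ((Y - W i) * N i).trace := le_add_of_nonneg_right hgap
    _ = Y.trace := by
      rw [← Finset.sum_add_distrib]
      simp only [sub_mul, trace_sub, add_sub_cancel, ← trace_sum, ← Finset.mul_sum, hsum, mul_one]

end Matrix

theorem quadratic_form_nonneg_of_sq_le_mul {a b d : ℝ} (ha : 0 ≤ a) (hd : 0 ≤ d)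
    (hb : b ^ 2 ≤ a * d) (t u : ℝ) : 0 ≤ a * t ^ 2 + 2 * b * t * u + d * u ^ 2 := by
  rcases ha.eq_or_lt with rfl | ha
  · obtain rfl : b = 0 := by nlinarith
    simp only [zero_mul, mul_zero, add_zero, zero_add]
    positivity
  · refine nonneg_of_mul_nonneg_right ?_ ha
    nlinarith [sq_nonneg (a * t + b * u), mul_nonneg (sub_nonneg.2 hb) (sq_nonneg u)]

def realSymm (a b d : ℝ) : Matrix (Fin 2) (Fin 2) ℂ := !![(a : ℂ), b; b, d]

theorem realSymm_sub (a b d a' b' d' : ℝ) :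
    realSymm a b d - realSymm a' b' d' = realSymm (a - a') (b - b') (d - d') := by
  ext i j
  fin_cases i <;> fin_cases j <;> simp [realSymm]

theorem trace_realSymm (a b d : ℝ) : (realSymm a b d).trace = ((a + d : ℝ) : ℂ) := by
  simp [realSymm, trace_fin_two]

theorem posSemidef_realSymm {a b d : ℝ} (ha : 0 ≤ a) (hd : 0 ≤ d) (hb : b ^ 2 ≤ a * d) :
    (realSymm a b d).PosSemidef := by
  rw [posSemidef_iff_dotProduct_mulVec]
  refine ⟨?_, fun x => ?_⟩
  · ext i j
    fin_cases i <;> fin_cases j <;> simp [realSymm]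
  · rw [Complex.nonneg_iff]
    simp only [dotProduct, Pi.star_apply, RCLike.star_def, mulVec, realSymm, of_apply, cons_val',
      cons_val_fin_one, Fin.sum_univ_two, Fin.isValue, cons_val_zero, cons_val_one,
      Complex.add_re, Complex.mul_re, Complex.conj_re, Complex.ofReal_re, Complex.ofReal_im,
      zero_mul, sub_zero, Complex.conj_im, Complex.add_im, Complex.mul_im, add_zero, neg_mul,
      sub_neg_eq_add]
    constructor
    · nlinarith [quadratic_form_nonneg_of_sq_le_mul ha hd hb (x 0).re (x 1).re,
        quadratic_form_nonneg_of_sq_le_mul ha hd hb (x 0).im (x 1).im]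
    · ring

def objectiveWeight (c s : ℝ) : Fin 2 × Fin 2 → Matrix (Fin 2) (Fin 2) ℂ
  | (0, 0) => realSymm (1 + c) 0 (c - 1)
  | (0, 1) => realSymm 0 (-s) 0
  | (1, 0) => realSymm 0 s 0
  | (1, 1) => realSymm (-1 - c) 0 (1 - c)

theorem objective_eq_sum_objectiveWeight (N : Fin 2 → Fin 2 → Matrix (Fin 2) (Fin 2) ℂ)
    (c s : ℝ) :
    ((!![1, 0; 0, -1] : Matrix (Fin 2) (Fin 2) ℂ) * (N 0 0 + N 0 1 - N 1 0 - N 1 1)).trace +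
        ((!![1, 0; 0, -1] : Matrix (Fin 2) (Fin 2) ℂ) * (N 0 0 - N 0 1 + N 1 0 - N 1 1)).trace -
        (s : ℂ) * ((!![0, 1; 1, 0] : Matrix (Fin 2) (Fin 2) ℂ) *
          (N 0 0 + N 0 1 - N 1 0 - N 1 1)).trace +
        (s : ℂ) * ((!![0, 1; 1, 0] : Matrix (Fin 2) (Fin 2) ℂ) *
          (N 0 0 - N 0 1 + N 1 0 - N 1 1)).trace +
        (c : ℂ) * ((N 0 0 + N 0 1 - N 1 0 - N 1 1) + (N 0 0 - N 0 1 + N 1 0 - N 1 1)).trace =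
      2 * ∑ p, (objectiveWeight c s p * N p.1 p.2).trace := by
  simp only [Fintype.sum_prod_type, Fin.sum_univ_two, Fin.isValue, objectiveWeight, realSymm,
    trace_add, trace_sub, trace_fin_two, mul_apply, cons_mul, Nat.succ_eq_add_one, Nat.reduceAdd,
    empty_mul, Equiv.symm_apply_apply, of_apply, cons_val', vecMul, dotProduct, Matrix.sub_apply,
    Matrix.add_apply, cons_val_zero, cons_val_one, cons_val_fin_one, one_mul, zero_mul, add_zero,
    zero_add, neg_mul, neg_sub, Complex.ofReal_add, Complex.ofReal_one, Complex.ofReal_zero,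
    Complex.ofReal_sub, Complex.ofReal_neg]
  ring

theorem sub_objectiveWeight_posSemidef {c s : ℝ} (hcs : s ^ 2 + c ^ 2 = 1) (p : Fin 2 × Fin 2) :
    (realSymm (1 + c) 0 (1 - c) - objectiveWeight c s p).PosSemidef := by
  obtain ⟨i, j⟩ := p
  fin_cases i <;> fin_cases j <;> simp only [objectiveWeight, realSymm_sub] <;>
    apply posSemidef_realSymm <;> nlinarith

theorem stmt12_general (N : Fin 2 → Fin 2 → Matrix (Fin 2) (Fin 2) ℂ)
    (hpos : ∀ i j, (N i j).PosSemidef)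
    (hsum : N 0 0 + N 0 1 + N 1 0 + N 1 1 = 1)
    (θ : ℝ) :
    (1 / 2 : ℝ) *
      (((!![1, 0; 0, -1] : Matrix (Fin 2) (Fin 2) ℂ) *
          (N 0 0 + N 0 1 - N 1 0 - N 1 1)).trace +
       ((!![1, 0; 0, -1] : Matrix (Fin 2) (Fin 2) ℂ) *
          (N 0 0 - N 0 1 + N 1 0 - N 1 1)).trace -
       (Real.sin θ : ℂ) * ((!![0, 1; 1, 0] : Matrix (Fin 2) (Fin 2) ℂ) *
          (N 0 0 + N 0 1 - N 1 0 - N 1 1)).trace +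
       (Real.sin θ : ℂ) * ((!![0, 1; 1, 0] : Matrix (Fin 2) (Fin 2) ℂ) *
          (N 0 0 - N 0 1 + N 1 0 - N 1 1)).trace +
       (Real.cos θ : ℂ) *
          ((N 0 0 + N 0 1 - N 1 0 - N 1 1) + (N 0 0 - N 0 1 + N 1 0 - N 1 1)).trace).re
      ≤ 2 := by
  have hsum' : ∑ p : Fin 2 × Fin 2, N p.1 p.2 = 1 := by
    simpa [Fintype.sum_prod_type, Fin.sum_univ_two, add_assoc] using hsum
  have hle := sum_trace_mul_le_trace (fun p => hpos p.1 p.2) hsum'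
    (sub_objectiveWeight_posSemidef (Real.sin_sq_add_cos_sq θ))
  rw [trace_realSymm, add_add_sub_cancel, one_add_one_eq_two] at hle
  have hre := (Complex.le_def.mp hle).1
  rw [objective_eq_sum_objectiveWeight, ← Complex.ofReal_ofNat, Complex.re_ofReal_mul]
  norm_num at hre ⊢
  linarith

/-- Joint-measurability inequality underlying `J^{θ+,θ−}_L ≤ 2`: for marginals
`B0`, `B1` of a four-outcome POVM on ℂ² and `θ− ∈ (0, π/2)`,
`(1/2)[Tr(Z·B0) + Tr(Z·B1) − sinθ−·Tr(X·B0) + sinθ−·Tr(X·B1) + cosθ−·Tr(B0+B1)] ≤ 2`. -/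
theorem stmt12 (N : Fin 2 → Fin 2 → Matrix (Fin 2) (Fin 2) ℂ)
    (hpos : ∀ i j, (N i j).PosSemidef)
    (hsum : N 0 0 + N 0 1 + N 1 0 + N 1 1 = 1)
    (θ : ℝ) (hθ : θ ∈ Set.Ioo 0 (Real.pi / 2)) :
    (1 / 2 : ℝ) *
      (((!![1, 0; 0, -1] : Matrix (Fin 2) (Fin 2) ℂ) *
          (N 0 0 + N 0 1 - N 1 0 - N 1 1)).trace +
       ((!![1, 0; 0, -1] : Matrix (Fin 2) (Fin 2) ℂ) *
          (N 0 0 - N 0 1 + N 1 0 - N 1 1)).trace -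
       (Real.sin θ : ℂ) * ((!![0, 1; 1, 0] : Matrix (Fin 2) (Fin 2) ℂ) *
          (N 0 0 + N 0 1 - N 1 0 - N 1 1)).trace +
       (Real.sin θ : ℂ) * ((!![0, 1; 1, 0] : Matrix (Fin 2) (Fin 2) ℂ) *
          (N 0 0 - N 0 1 + N 1 0 - N 1 1)).trace +
       (Real.cos θ : ℂ) *
          ((N 0 0 + N 0 1 - N 1 0 - N 1 1) + (N 0 0 - N 0 1 + N 1 0 - N 1 1)).trace).re
      ≤ 2 :=
  stmt12_general N hpos hsum θ
end

section
/- Let {N_{β0β1}}_{β0,β1 ∈ {0,1,2}} be a nine-outcome POVM on ℂ², and define B0 = Σ_{β1}(N_{0β1} − N_{1β1}), B1 = Σ_{β0}(N_{β00} − N_{β01}), T0 = Σ_{β1}(N_{0β1} + N_{1β1}), T1 = Σ_{β0}(N_{β00} + N_{β01}). Then (1/2)·Tr[Z·B0 + X·B1 − (T0 + T1)/2] ≤ 1/2. -/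
/-!
Write the operator inside the trace as `∑ C_{β₀β₁} N_{β₀β₁}` with
`C = s Z + t X - (s² + t²)/2 · I`, where `s, t ∈ {1, -1, 0}` are the click signs. The spectrum of
`s Z + t X` is `±√(s² + t²)`, and `√(s² + t²) ≤ (1 + s² + t²)/2`, so `C ⪯ I/2`. Since
`Tr[A B] ≥ 0` for positive semidefinite `A, B`, this gives `Tr[∑ C N] ≤ ½ Tr[∑ N] = ½ Tr I = 1`.
-/

open Matrix ComplexOrder Finset

def pauliZ : Matrix (Fin 2) (Fin 2) ℂ := !![1, 0; 0, -1]

def pauliX : Matrix (Fin 2) (Fin 2) ℂ := !![0, 1; 1, 0]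

lemma quadratic_form_nonneg_of_sq_add_sq_le {a b c : ℝ} (ha : 0 ≤ a) (h : b ^ 2 + c ^ 2 ≤ a ^ 2)
    (p r : ℝ) : 0 ≤ (a + b) * p ^ 2 + 2 * c * p * r + (a - b) * r ^ 2 := by
  rcases ha.eq_or_lt with rfl | ha
  · obtain ⟨rfl, rfl⟩ : b = 0 ∧ c = 0 := by constructor <;> nlinarith
    simp
  · refine nonneg_of_mul_nonneg_right ?_ (by positivity : 0 < 2 * a)
    have key : 2 * a * ((a + b) * p ^ 2 + 2 * c * p * r + (a - b) * r ^ 2) =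
        ((a + b) * p + c * r) ^ 2 + ((a - b) * r + c * p) ^ 2 +
          (a ^ 2 - b ^ 2 - c ^ 2) * (p ^ 2 + r ^ 2) := by
      ring
    nlinarith [sq_nonneg ((a + b) * p + c * r), sq_nonneg ((a - b) * r + c * p),
      mul_nonneg (sub_nonneg.2 h) (add_nonneg (sq_nonneg p) (sq_nonneg r))]

lemma posSemidef_smul_one_add_smul_pauliZ_add_smul_pauliX {a b c : ℝ} (ha : 0 ≤ a)
    (h : b ^ 2 + c ^ 2 ≤ a ^ 2) :
    ((a : ℂ) • 1 + (b : ℂ) • pauliZ + (c : ℂ) • pauliX).PosSemidef := by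
  have hherm : ((a : ℂ) • 1 + (b : ℂ) • pauliZ + (c : ℂ) • pauliX).IsHermitian := by
    ext i j
    fin_cases i <;> fin_cases j <;> simp [pauliZ, pauliX]
  refine .of_dotProduct_mulVec_nonneg hherm fun x => ?_
  rw [Complex.nonneg_iff]
  refine ⟨?_, (hherm.im_star_dotProduct_mulVec_self x).symm⟩
  simp [dotProduct, mulVec, Fin.sum_univ_two, pauliZ, pauliX]
  linarith [quadratic_form_nonneg_of_sq_add_sq_le ha h (x 0).re (x 1).re,
    quadratic_form_nonneg_of_sq_add_sq_le ha h (x 0).im (x 1).im]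

section Trace

variable {ι n 𝕜 : Type*} [Fintype n] [DecidableEq n] [RCLike 𝕜]

open MatrixOrder in
lemma Matrix.PosSemidef.trace_mul_nonneg_s14 {A B : Matrix n n 𝕜} (hA : A.PosSemidef)
    (hB : B.PosSemidef) : 0 ≤ (A * B).trace := by
  have hsq : CFC.sqrt A * CFC.sqrt A = A := CFC.sqrt_mul_sqrt_self A hA.nonneg
  have hherm : (CFC.sqrt A)ᴴ = CFC.sqrt A := (CFC.sqrt_nonneg A).posSemidef.isHermitian
  have hcycle : (A * B).trace = (CFC.sqrt A * B * (CFC.sqrt A)ᴴ).trace := by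
    rw [hherm, trace_mul_cycle, hsq]
  rw [hcycle]
  exact (hB.mul_mul_conjTranspose_same _).trace_nonneg

lemma trace_sum_mul_le_mul_trace_sum [Fintype ι] {C N : ι → Matrix n n 𝕜} {c : 𝕜}
    (hC : ∀ k, (c • 1 - C k).PosSemidef) (hN : ∀ k, (N k).PosSemidef) :
    (∑ k, C k * N k).trace ≤ c * (∑ k, N k).trace := by
  have hgap : c * (∑ k, N k).trace - (∑ k, C k * N k).trace =
      ∑ k, ((c • 1 - C k) * N k).trace := by
    simp [trace_sum, Finset.mul_sum, sub_mul, trace_sub]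
  rw [← sub_nonneg, hgap]
  exact Finset.sum_nonneg fun k _ => (hC k).trace_mul_nonneg_s14 (hN k)

end Trace

def clickSign : Fin 3 → ℝ
  | 0 => 1
  | 1 => -1
  | 2 => 0

/-- The paper's `C_{β₀β₁}` is `jointWitness (clickSign β₀) (clickSign β₁)`. -/
noncomputable def jointWitness (s t : ℝ) : Matrix (Fin 2) (Fin 2) ℂ :=
  (s : ℂ) • pauliZ + (t : ℂ) • pauliX - (((s ^ 2 + t ^ 2) / 2 : ℝ) : ℂ) • 1

lemma posSemidef_half_sub_jointWitness (s t : ℝ) :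
    ((2⁻¹ : ℂ) • 1 - jointWitness s t).PosSemidef := by
  -- `s² + t² ≤ ((1 + s² + t²) / 2)²` is AM-GM for `1` and `s² + t²`.
  have h := posSemidef_smul_one_add_smul_pauliZ_add_smul_pauliX
    (a := (1 + s ^ 2 + t ^ 2) / 2) (b := -s) (c := -t) (by positivity)
    (by nlinarith [sq_nonneg (1 - s ^ 2 - t ^ 2)])
  convert h using 1
  simp only [jointWitness]
  push_cast
  module

lemma noBinning_eq_sum_jointWitness_mul (N : Fin 3 → Fin 3 → Matrix (Fin 2) (Fin 2) ℂ) :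
    pauliZ * (∑ j, (N 0 j - N 1 j)) + pauliX * (∑ i, (N i 0 - N i 1)) -
        (2⁻¹ : ℂ) • ((∑ j, (N 0 j + N 1 j)) + (∑ i, (N i 0 + N i 1))) =
      ∑ k : Fin 3 × Fin 3, jointWitness (clickSign k.1) (clickSign k.2) * N k.1 k.2 := by
  simp only [Fintype.sum_prod_type, Fin.sum_univ_three, jointWitness, clickSign, sub_mul,
    add_mul, smul_mul_assoc, one_mul, Matrix.mul_add, Matrix.mul_sub]
  push_cast
  module

/-- Joint-measurability inequality for the no-binning expression: if `B0, B1, T0, T1`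
are marginals of a nine-outcome POVM on ℂ², then
`(1/2)·Tr[Z·B0 + X·B1 − (T0+T1)/2] ≤ 1/2`. -/
theorem stmt14 (N : Fin 3 → Fin 3 → Matrix (Fin 2) (Fin 2) ℂ)
    (hpos : ∀ i j, (N i j).PosSemidef)
    (hsum : ∑ i : Fin 3, ∑ j : Fin 3, N i j = 1) :
    (1 / 2 : ℝ) *
      (((!![1, 0; 0, -1] : Matrix (Fin 2) (Fin 2) ℂ) *
          (∑ j : Fin 3, (N 0 j - N 1 j)) +
        (!![0, 1; 1, 0] : Matrix (Fin 2) (Fin 2) ℂ) *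
          (∑ i : Fin 3, (N i 0 - N i 1)) -
        ((2 : ℂ))⁻¹ • ((∑ j : Fin 3, (N 0 j + N 1 j)) +
          (∑ i : Fin 3, (N i 0 + N i 1)))).trace).re
      ≤ 1 / 2 := by
  have hbound := trace_sum_mul_le_mul_trace_sum
    (C := fun k : Fin 3 × Fin 3 => jointWitness (clickSign k.1) (clickSign k.2))
    (fun k => posSemidef_half_sub_jointWitness _ _) (fun k => hpos k.1 k.2)
  have htrace : (2⁻¹ : ℂ) * (∑ i, ∑ j, N i j).trace = 1 := by
    rw [hsum, trace_one, Fintype.card_fin]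
    norm_num
  rw [← noBinning_eq_sum_jointWitness_mul, Fintype.sum_prod_type, htrace] at hbound
  have hre := Complex.re_le_re hbound
  rw [Complex.one_re] at hre
  exact (mul_le_mul_of_nonneg_left hre (by norm_num)).trans_eq (mul_one _)
end
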